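/- arXiv:1507.04166 — 3 statements merged into one kernel-verified Lean document; each statement's English description precedes it below -/
import Mathlib

section
/- Let S be a local ring with maximal ideal m, let k be a field mapping to S, and ℓ a field extension of k. Suppose S ⊗_k ℓ and an S-module R are both flat over S, and there is an injective S-module map S ⊗_k ℓ → R. Then the induced map (S/m) ⊗_k ℓ → (S/m) ⊗_S R is injective, provided every element of m is nilpotent. -/
/-!
As `S ⊗[k] ℓ` is free over the local ring `S`, an element `x ∉ m (S ⊗[k] ℓ)` has a unit
coordinate, so `a • x = 0` forces `a = 0`; by injectivity the same holds for `f x`. If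
`f x ∈ m R`, then already `f x ∈ I R` for a finitely generated `I ≤ m`, which is nilpotent,
and any nonzero element of the last nonzero power of `I` kills `f x`.
-/

open TensorProduct

namespace Submodule

variable {S M : Type*} [CommRing S] [AddCommGroup M] [Module S M]

theorem exists_fg_le_and_mem_smul_top {I : Ideal S} {y : M} (hy : y ∈ I • (⊤ : Submodule S M)) :
    ∃ J : Ideal S, J.FG ∧ J ≤ I ∧ y ∈ J • (⊤ : Submodule S M) := by
  refine smul_induction_on hy (fun a ha _ _ ↦ ?_) fun y z hy hz ↦ ?_
  · exact ⟨Ideal.span {a}, ⟨{a}, by simp⟩, (Ideal.span_singleton_le_iff_mem I).2 ha,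
      smul_mem_smul (Ideal.mem_span_singleton_self a) mem_top⟩
  · obtain ⟨J₁, hJ₁, hJ₁I, hy⟩ := hy
    obtain ⟨J₂, hJ₂, hJ₂I, hz⟩ := hz
    exact ⟨J₁ ⊔ J₂, FG.sup hJ₁ hJ₂, sup_le hJ₁I hJ₂I,
      add_mem (smul_mono_left le_sup_left hy) (smul_mono_left le_sup_right hz)⟩

theorem exists_ne_zero_smul_eq_zero_of_isNilpotent [Nontrivial S] {I : Ideal S}
    (hI : IsNilpotent I) {y : M} (hy : y ∈ I • (⊤ : Submodule S M)) :
    ∃ a : S, a ≠ 0 ∧ a • y = 0 := by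
  classical
  have hn : Nat.find hI ≠ 0 := fun h ↦ by
    simpa [h, Ideal.one_eq_top] using Nat.find_spec hI
  obtain ⟨n, hn'⟩ := Nat.exists_eq_succ_of_ne_zero hn
  obtain ⟨a, ha, ha0⟩ := exists_mem_ne_zero_of_ne_bot
    (Nat.find_min hI (hn' ▸ n.lt_succ_self))
  refine ⟨a, ha0, ?_⟩
  have : a • y ∈ (I ^ Nat.find hI) • (⊤ : Submodule S M) := by
    rw [hn', pow_succ, ← smul_eq_mul, smul_assoc]
    exact smul_mem_smul ha hy
  simpa [Nat.find_spec hI] using this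

theorem exists_ne_zero_smul_eq_zero_of_le_nilradical [Nontrivial S] {I : Ideal S}
    (hI : I ≤ nilradical S) {y : M} (hy : y ∈ I • (⊤ : Submodule S M)) :
    ∃ a : S, a ≠ 0 ∧ a • y = 0 := by
  obtain ⟨J, hJ, hJI, hy⟩ := exists_fg_le_and_mem_smul_top hy
  exact exists_ne_zero_smul_eq_zero_of_isNilpotent
    (hJ.isNilpotent_iff_le_nilradical.2 (hJI.trans hI)) hy

end Submodule

theorem IsLocalRing.eq_zero_of_smul_eq_zero_of_notMem_maximalIdeal_smul_top
    {S M : Type*} [CommRing S] [IsLocalRing S] [AddCommGroup M] [Module S M] [Module.Free S M]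
    {x : M} (hx : x ∉ IsLocalRing.maximalIdeal S • (⊤ : Submodule S M)) {a : S}
    (hax : a • x = 0) : a = 0 := by
  let b := Module.Free.chooseBasis S M
  obtain ⟨i, hi⟩ : ∃ i, b.repr x i ∉ IsLocalRing.maximalIdeal S := by
    by_contra! h
    refine hx (b.linearCombination_repr x ▸ Submodule.sum_mem _ fun i _ ↦ ?_)
    exact Submodule.smul_mem_smul (h i) Submodule.mem_top
  have : a * b.repr x i = 0 := by simpa using congr(b.repr $hax i)
  exact (IsLocalRing.notMem_maximalIdeal.1 hi).mul_left_eq_zero.1 this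

theorem TensorProduct.one_tmul_eq_zero_iff_mem_smul_top {S M : Type*} [CommRing S]
    [AddCommGroup M] [Module S M] (I : Ideal S) (x : M) :
    (1 : S ⧸ I) ⊗ₜ[S] x = 0 ↔ x ∈ I • (⊤ : Submodule S M) := by
  rw [← (quotTensorEquivQuotSMul M I).map_eq_zero_iff, quotTensorEquivQuotSMul_mk_one_tmul,
    Submodule.Quotient.mk_eq_zero]

theorem LinearMap.lTensor_quotient_injective_iff {S M N : Type*} [CommRing S]
    [AddCommGroup M] [Module S M] [AddCommGroup N] [Module S N] (I : Ideal S) (f : M →ₗ[S] N) :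
    Function.Injective (f.lTensor (S ⧸ I)) ↔
      ∀ x, f x ∈ I • (⊤ : Submodule S N) → x ∈ I • (⊤ : Submodule S M) := by
  rw [injective_iff_map_eq_zero, (quotTensorEquivQuotSMul M I).symm.surjective.forall,
    (Submodule.mkQ_surjective _).forall]
  simp [one_tmul_eq_zero_iff_mem_smul_top]

theorem pv_reduction_mod_max_ideal_general
    (k : Type*) [Field k] (S : Type*) [CommRing S] [IsLocalRing S] [Algebra k S]
    (ℓ : Type*) [Field ℓ] [Algebra k ℓ]
    (R : Type*) [AddCommGroup R] [Module S R]
    (f : (S ⊗[k] ℓ) →ₗ[S] R) (hf : Function.Injective f)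
    (hnil : ∀ x ∈ IsLocalRing.maximalIdeal S, IsNilpotent x) :
    Function.Injective
      (LinearMap.lTensor (S ⧸ IsLocalRing.maximalIdeal S) f) := by
  refine (LinearMap.lTensor_quotient_injective_iff _ f).2 fun x hfx ↦ ?_
  by_contra hx
  obtain ⟨a, ha, hax⟩ :=
    Submodule.exists_ne_zero_smul_eq_zero_of_le_nilradical (fun s hs ↦ hnil s hs) hfx
  refine ha (IsLocalRing.eq_zero_of_smul_eq_zero_of_notMem_maximalIdeal_smul_top hx ?_)
  exact hf (by rw [map_smul, hax, map_zero])

/-- Let `S` be a local ring with maximal ideal `m` all of whose elements are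
nilpotent, `k` a field mapping to `S`, and `ℓ` a field extension of `k`. If `S ⊗[k] ℓ` and an
`S`-module `R` are flat over `S` and there is an injective `S`-linear map `S ⊗[k] ℓ → R`, then
the induced map `(S/m) ⊗[S] (S ⊗[k] ℓ) → (S/m) ⊗[S] R`, i.e. `(S/m) ⊗[k] ℓ → (S/m) ⊗[S] R`,
is injective. -/
theorem pv_reduction_mod_max_ideal
    (k : Type*) [Field k] (S : Type*) [CommRing S] [IsLocalRing S] [Algebra k S]
    (ℓ : Type*) [Field ℓ] [Algebra k ℓ]
    (R : Type*) [AddCommGroup R] [Module S R]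
    [Module.Flat S (S ⊗[k] ℓ)] [Module.Flat S R]
    (f : (S ⊗[k] ℓ) →ₗ[S] R) (hf : Function.Injective f)
    (hnil : ∀ x ∈ IsLocalRing.maximalIdeal S, IsNilpotent x) :
    Function.Injective
      (LinearMap.lTensor (S ⧸ IsLocalRing.maximalIdeal S) f) :=
  pv_reduction_mod_max_ideal_general k S ℓ R f hf hnil
end

section
/- Let k be a field, S a k-algebra that is a field, and R a finitely generated S-algebra. If ℓ is a field extension of k such that S ⊗_k ℓ embeds into R as an S-algebra, then ℓ is algebraic over k. -/
/-!
Suppose `a ∈ ℓ` is transcendental over `k`. Since `S` is flat over `k`, `x = f (1 ⊗ a)` is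
transcendental over `S`, so `S[X] → R`, `X ↦ x`, is injective and of finite type. By Chevalley's
theorem its image in `Spec S[X]` is constructible; it contains the generic point, hence some
`D(g)` with `g ≠ 0`. Every nonzero `p ∈ k[X]` is invertible in `R` because `p(a) ≠ 0` in `ℓ`, so
`D(g) ⊆ D(p)`, i.e. `p ∣ g ^ n` in `S[X]`. But the infinitely many monic irreducibles of `k[X]`
stay pairwise coprime in `S[X]`, so they cannot all share a prime factor with `g`.
-/

open Polynomial TensorProduct

namespace PrimeSpectrum

lemma exists_basicOpen_subset_of_isConstructible {A : Type*} [CommRing A] [IsDomain A]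
    {s : Set (PrimeSpectrum A)} (hs : Topology.IsConstructible s) (hbot : ⊥ ∈ s) :
    ∃ g : A, g ≠ 0 ∧ (basicOpen g : Set (PrimeSpectrum A)) ⊆ s := by
  obtain ⟨T, rfl⟩ := exists_constructibleSetData_iff.mpr hs
  obtain ⟨C, hC, hgC, hfC⟩ := Set.mem_iUnion₂.mp hbot
  have hg : ∀ i, C.g i = 0 := fun i => hgC ⟨i, rfl⟩
  refine ⟨C.f, fun h => hfC (by simp [h]), fun P hP => Set.mem_biUnion hC ⟨?_, by simpa using hP⟩⟩
  rintro _ ⟨i, rfl⟩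
  simp [hg i]

end PrimeSpectrum

theorem RingHom.FiniteType.exists_ne_zero_forall_isUnit_dvd_pow {A B : Type*} [CommRing A]
    [IsDomain A] [IsNoetherianRing A] [CommRing B] {φ : A →+* B} (hφ : φ.FiniteType)
    (hinj : Function.Injective φ) :
    ∃ g : A, g ≠ 0 ∧ ∀ a : A, IsUnit (φ a) → ∃ n : ℕ, a ∣ g ^ n := by
  have hbot : ⊥ ∈ Set.range (PrimeSpectrum.comap φ) := by
    obtain ⟨Q, hQ, hQbot⟩ := Ideal.exists_comap_eq_of_mem_minimalPrimes_of_injective hinj ⊥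
      (by rw [IsDomain.minimalPrimes_eq_singleton_bot]; rfl)
    exact ⟨⟨Q, hQ⟩, PrimeSpectrum.ext hQbot⟩
  have hrange := PrimeSpectrum.isConstructible_range_comap (FinitePresentation.of_finiteType.mp hφ)
  obtain ⟨g, hg0, hg⟩ := PrimeSpectrum.exists_basicOpen_subset_of_isConstructible hrange hbot
  refine ⟨g, hg0, fun a ha => ?_⟩
  have hle : PrimeSpectrum.basicOpen g ≤ PrimeSpectrum.basicOpen a := by
    intro P hP
    obtain ⟨Q, rfl⟩ := hg hP
    exact fun haQ => Q.isPrime.ne_top (Ideal.eq_top_of_isUnit_mem _ haQ ha)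
  obtain ⟨n, hn⟩ := (PrimeSpectrum.basicOpen_le_basicOpen_iff g a).mp hle
  exact ⟨n, Ideal.mem_span_singleton.mp hn⟩

theorem Transcendental.one_tmul {k S ℓ : Type*} [CommRing k] [CommRing S] [Algebra k S]
    [Module.Flat k S] [CommRing ℓ] [Algebra k ℓ] {a : ℓ} (ha : Transcendental k a) :
    Transcendental S ((1 : S) ⊗ₜ[k] a) := by
  rw [transcendental_iff_injective] at ha ⊢
  have h : (Polynomial.aeval ((1 : S) ⊗ₜ[k] a) : S[X] →ₐ[S] S ⊗[k] ℓ) =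
      (Algebra.TensorProduct.lTensor S (Polynomial.aeval a)).comp (polyEquivTensor' k S).toAlgHom :=
    algHom_ext (by simp [polyEquivTensor_apply])
  rw [h, AlgHom.coe_comp]
  exact (Module.Flat.lTensor_preserves_injective_linearMap (M := S) _ ha).comp
    (polyEquivTensor' k S).injective

namespace Polynomial

theorem infinite_setOf_monic_irreducible (k : Type*) [Field k] :
    {p : k[X] | p.Monic ∧ Irreducible p}.Infinite := by
  intro hfin
  set Q := ∏ p ∈ hfin.toFinset, p
  have hQ : Q.Monic := monic_prod_of_monic _ _ fun p hp => (hfin.mem_toFinset.mp hp).1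
  have hdeg : (X * Q + 1).natDegree = Q.natDegree + 1 := by
    rw [natDegree_add_eq_left_of_natDegree_lt] <;> simp [natDegree_X_mul hQ.ne_zero]
  have hunit : ¬IsUnit (X * Q + 1) := not_isUnit_of_natDegree_pos _ (by omega)
  obtain ⟨r, hr, hri, hrP⟩ := exists_monic_irreducible_factor _ hunit
  have hrQ : r ∣ X * Q := (Finset.dvd_prod_of_mem _ (hfin.mem_toFinset.mpr ⟨hr, hri⟩)).mul_left X
  exact hri.not_isUnit (isUnit_of_dvd_one ((dvd_add_right hrQ).mp hrP))

theorem eq_zero_of_forall_map_dvd_pow {k S : Type*} [Field k] [Field S] [Algebra k S] {g : S[X]}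
    (h : ∀ p : k[X], p ≠ 0 → ∃ n : ℕ, p.map (algebraMap k S) ∣ g ^ n) : g = 0 := by
  classical
  by_contra hg
  have hfactor : ∀ p ∈ {p : k[X] | p.Monic ∧ Irreducible p},
      ∃ q ∈ UniqueFactorizationMonoid.normalizedFactors g, q ∣ p.map (algebraMap k S) := by
    rintro p ⟨-, hp⟩
    obtain ⟨n, hn⟩ := h p hp.ne_zero
    have hpS : ¬IsUnit (p.map (algebraMap k S)) :=
      not_isUnit_of_natDegree_pos _ (by rw [natDegree_map]; exact hp.natDegree_pos)
    obtain ⟨r, hr, hrp⟩ :=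
      WfDvdMonoid.exists_irreducible_factor hpS (Polynomial.map_ne_zero hp.ne_zero)
    obtain ⟨q, hq, hrq⟩ := UniqueFactorizationMonoid.exists_mem_normalizedFactors_of_dvd hg hr
      (hr.prime.dvd_of_dvd_pow (hrp.trans hn))
    exact ⟨q, hq, hrq.symm.dvd.trans hrp⟩
  choose! F hFg hFp using hfactor
  refine infinite_setOf_monic_irreducible k <| Set.Finite.of_injOn
    (t := {q | q ∈ UniqueFactorizationMonoid.normalizedFactors g}) hFg ?_ (Multiset.finite_toSet _)
  rintro p₁ ⟨hm₁, hi₁⟩ p₂ ⟨hm₂, hi₂⟩ hF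
  by_contra hne
  have hcop : IsCoprime p₁ p₂ := (hi₁.coprime_iff_not_dvd).mpr fun hdvd =>
    hne (eq_of_monic_of_associated hm₁ hm₂ (hi₁.associated_of_dvd hi₂ hdvd))
  have hcopS := hcop.map (mapRingHom (algebraMap k S))
  have hirr := UniqueFactorizationMonoid.irreducible_of_normalized_factor _ (hFg _ ⟨hm₁, hi₁⟩)
  exact hirr.not_isUnit (hcopS.isUnit_of_dvd' (hFp _ ⟨hm₁, hi₁⟩) (hF ▸ hFp _ ⟨hm₂, hi₂⟩))

end Polynomial

/-- Let `k` be a field, `S` a `k`-algebra which is a field, and `R` a finitely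
generated `S`-algebra. If `ℓ` is a field extension of `k` such that `S ⊗[k] ℓ` embeds into `R`
as an `S`-algebra, then `ℓ` is algebraic over `k`. -/
theorem pv_ell_algebraic
    (k : Type*) [Field k] (S : Type*) [Field S] [Algebra k S]
    (R : Type*) [CommRing R] [Algebra S R]
    (hfg : Algebra.FiniteType S R)
    (ℓ : Type*) [Field ℓ] [Algebra k ℓ]
    (f : (S ⊗[k] ℓ) →ₐ[S] R) (hf : Function.Injective f) :
    Algebra.IsAlgebraic k ℓ := by
  refine ⟨fun a => ?_⟩
  by_contra ha
  set φ : S[X] →ₐ[S] R := f.comp (aeval ((1 : S) ⊗ₜ[k] a))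
  have hφ : (φ : S[X] →+* R).FiniteType := RingHom.FiniteType.of_comp_finiteType
    (f := algebraMap S S[X]) (by rwa [AlgHom.comp_algebraMap, RingHom.finiteType_algebraMap])
  obtain ⟨g, hg0, hg⟩ :=
    hφ.exists_ne_zero_forall_isUnit_dvd_pow
      (hf.comp (transcendental_iff_injective.mp (Transcendental.one_tmul ha)))
  refine hg0 (eq_zero_of_forall_map_dvd_pow (k := k) fun p hp => hg _ ?_)
  have hpa : IsUnit (aeval a p) := Ne.isUnit fun h => ha ⟨p, hp, h⟩
  have hφp : φ (p.map (algebraMap k S)) = f (1 ⊗ₜ aeval a p) := by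
    simp [φ, aeval_map_algebraMap, ← Algebra.TensorProduct.includeRight_apply, aeval_algHom_apply]
  rw [AlgHom.coe_toRingHom, hφp]
  exact (hpa.map Algebra.TensorProduct.includeRight).map f
end

section
/- Let F: D → C and G: C → D be an adjoint pair (F left adjoint to G) between abelian categories, with unit η: id_D → G∘F and counit ε: F∘G → id_C. If η_V is an isomorphism for all V and F is exact and every subobject of F(V) is of the form F(W), then ε_M is a monomorphism for every M ∈ C, provided G is left exact. -/
/-!
Since `η_{G M}` is invertible, the triangle identity `η_{G M} ≫ G(ε_M) = 𝟙` makes `G(ε_M)` an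
isomorphism. As a right adjoint, `G` preserves monomorphisms and zero maps, so `G` of the kernel
inclusion of `ε_M` is a monomorphism killed by an isomorphism, whence `G(ker ε_M) = 0`. Writing the
subobject `ker ε_M` of `F(G M)` as `F(W)`, we get `W ≅ G(F W) = 0`, so `ker ε_M ≅ F(W) = 0`.
-/

open CategoryTheory CategoryTheory.Limits

universe v₁ v₂ u₁ u₂

namespace CategoryTheory

lemma Functor.isZero_obj_kernel_of_mono_map {C D : Type*} [Category C] [Category D]
    [HasZeroMorphisms C] [HasZeroMorphisms D] (G : C ⥤ D) [G.PreservesZeroMorphisms]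
    [G.PreservesMonomorphisms] {X Y : C} (f : X ⟶ Y) [HasKernel f] [Mono (G.map f)] :
    IsZero (G.obj (Limits.kernel f)) :=
  IsZero.of_mono_eq_zero (G.map (kernel.ι f)) <| by
    rw [← cancel_mono (G.map f), ← G.map_comp, kernel.condition, G.map_zero, zero_comp]

lemma Adjunction.isIso_map_counit_app_of_isIso_unit_app {C D : Type*} [Category C] [Category D]
    {F : C ⥤ D} {G : D ⥤ C} (adj : F ⊣ G) (M : D) [IsIso (adj.unit.app (G.obj M))] :
    IsIso (G.map (adj.counit.app M)) :=
  isIso_of_hom_comp_eq_id _ (adj.right_triangle_components M)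

end CategoryTheory

theorem pv_counit_mono_general
    (D : Type u₁) [Category.{v₁} D] [Abelian D]
    (C : Type u₂) [Category.{v₂} C] [Abelian C]
    (F : D ⥤ C) (G : C ⥤ D) (adj : F ⊣ G)
    (hη : ∀ V : D, IsIso (adj.unit.app V))
    (hsub : ∀ (V : D) (N : Subobject (F.obj V)), ∃ W : D, Nonempty ((N : C) ≅ F.obj W)) :
    ∀ M : C, Mono (adj.counit.app M) := by
  intro M
  set ε := adj.counit.app M
  have := adj.isLeftAdjoint
  have := adj.isRightAdjoint
  have := hη (G.obj M)
  have := adj.isIso_map_counit_app_of_isIso_unit_app M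
  have hGK : IsZero (G.obj (kernel ε)) := G.isZero_obj_kernel_of_mono_map ε
  obtain ⟨W, ⟨e⟩⟩ := hsub (G.obj M) (Subobject.mk (kernel.ι ε))
  let eK : kernel ε ≅ F.obj W := (Subobject.underlyingIso _).symm ≪≫ e
  have := hη W
  have hW : IsZero W := (hGK.of_iso (G.mapIso eK).symm).of_iso (asIso (adj.unit.app W))
  exact Preadditive.mono_of_isZero_kernel ε ((F.map_isZero hW).of_iso eK)

/-- Let `F ⊣ G` be an adjunction between abelian categories with unit `η` and
counit `ε`.  If every `η_V` is an isomorphism, `F` is exact, every subobject of `F(V)` is of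
the form `F(W)`, and `G` is left exact, then `ε_M` is a monomorphism for every `M`. -/
theorem pv_counit_mono
    (D : Type u₁) [Category.{v₁} D] [Abelian D]
    (C : Type u₂) [Category.{v₂} C] [Abelian C]
    (F : D ⥤ C) (G : C ⥤ D) (adj : F ⊣ G)
    [PreservesFiniteLimits F] [PreservesFiniteColimits F]
    [PreservesFiniteLimits G]
    (hη : ∀ V : D, IsIso (adj.unit.app V))
    (hsub : ∀ (V : D) (N : Subobject (F.obj V)), ∃ W : D, Nonempty ((N : C) ≅ F.obj W)) :
    ∀ M : C, Mono (adj.counit.app M) :=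
  pv_counit_mono_general D C F G adj hη hsub
end
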